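/- arXiv:1905.10685 — 4 statements merged into one kernel-verified Lean document; each statement's English description precedes it below -/
import Mathlib

section
/- Let V be a finite-dimensional vector space, ω : V → V an operator satisfying the Lefschetz property with middle weight k with respect to two increasing filtrations F_• and F_•'. If F_i ⊆ F_i' for all i, then F_• = F_•'. -/
/-- `ω` has degree 2 and satisfies the Lefschetz property with middle weight `k₀` with
respect to the finite increasing filtration `F` of `V`. -/
def IsLefschetzIncFiltration {k : Type*} [Field k] {V : Type*} [AddCommGroup V]
    [Module k V] (ω : V →ₗ[k] V) (F : ℤ → Submodule k V) (k₀ : ℤ) : Prop :=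
  Monotone F ∧
  (∃ N : ℕ, (∀ i : ℤ, i ≤ -(N : ℤ) → F i = ⊥) ∧ (∀ i : ℤ, (N : ℤ) ≤ i → F i = ⊤)) ∧
  (∀ i : ℤ, (F i).map ω ≤ F (i + 2)) ∧
  (∀ i : ℕ, 0 < i →
    ((F (k₀ - i)).map (ω ^ i) ⊔ F (k₀ + i - 1) = F (k₀ + i)) ∧
    (∀ x ∈ F (k₀ - i), (ω ^ i) x ∈ F (k₀ + i - 1) → x ∈ F (k₀ - i - 1)))

/-!
For `0 < j`, `ω ^ j` induces an isomorphism `F (k₀ - j) / F (k₀ - j - 1) ≃ F (k₀ + j) / F (k₀ + j - 1)`,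
so the graded pieces of weight `k₀ - j` and `k₀ + j` have equal dimension. Telescoping from weights
where `F` is `⊥` or `⊤` gives the duality `dim F i + dim F (2 k₀ - 1 - i) = dim V`, which depends on
nothing but `ω` and `k₀`. Hence if `F ≤ F'`, equality of these sums forces `dim F i = dim F' i`.
-/

open Submodule Module

lemma pow_apply_mem_of_map_le {R M : Type*} [Semiring R] [AddCommMonoid M] [Module R M]
    {ω : M →ₗ[R] M} {F : ℤ → Submodule R M} {d : ℤ}
    (hω : ∀ i, (F i).map ω ≤ F (i + d)) (n : ℕ) {m : ℤ} {x : M} (hx : x ∈ F m) :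
    (ω ^ n) x ∈ F (m + n * d) := by
  induction n with
  | zero => simpa using hx
  | succ n ih =>
    rw [pow_succ', Module.End.mul_apply]
    convert hω _ (mem_map_of_mem ih) using 2
    push_cast
    ring

/-- `T` induces an isomorphism `A / D ≃ C / B`. -/
lemma finrank_add_finrank_eq_of_map_sup_eq {k V W : Type*} [Field k] [AddCommGroup V]
    [Module k V] [AddCommGroup W] [Module k W] [FiniteDimensional k V] [FiniteDimensional k W]
    (T : V →ₗ[k] W) {A D : Submodule k V} {B C : Submodule k W} (hDA : D ≤ A)
    (hsurj : A.map T ⊔ B = C) (hker : ∀ x ∈ A, T x ∈ B ↔ x ∈ D) :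
    finrank k A + finrank k B = finrank k D + finrank k C := by
  have hBC : B ≤ C := hsurj ▸ le_sup_right
  let f : A →ₗ[k] W ⧸ B := B.mkQ ∘ₗ T ∘ₗ A.subtype
  let g : C →ₗ[k] W ⧸ B := B.mkQ ∘ₗ C.subtype
  have hker_f : LinearMap.ker f = D.comap A.subtype := by
    ext ⟨x, hx⟩
    simpa [f] using hker x hx
  have hker_g : LinearMap.ker g = B.comap C.subtype := by
    ext ⟨x, hx⟩
    simp [g]
  have hrange : LinearMap.range f = LinearMap.range g := by
    rw [LinearMap.range_comp, LinearMap.range_comp, LinearMap.range_comp, range_subtype,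
      range_subtype, ← hsurj, Submodule.map_sup, mkQ_map_self, sup_bot_eq]
  have hf := LinearMap.finrank_range_add_finrank_ker f
  have hg := LinearMap.finrank_range_add_finrank_ker g
  rw [hker_f, (comapSubtypeEquivOfLe hDA).finrank_eq] at hf
  rw [hker_g, (comapSubtypeEquivOfLe hBC).finrank_eq, ← hrange] at hg
  omega

namespace IsLefschetzIncFiltration

variable {k V : Type*} [Field k] [AddCommGroup V] [Module k V] [FiniteDimensional k V]
  {ω : V →ₗ[k] V} {F : ℤ → Submodule k V} {k₀ : ℤ}

lemma finrank_add_finrank_eq (hF : IsLefschetzIncFiltration ω F k₀) {j : ℕ} (hj : 0 < j) :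
    finrank k (F (k₀ - j)) + finrank k (F (k₀ + j - 1)) =
      finrank k (F (k₀ - j - 1)) + finrank k (F (k₀ + j)) := by
  obtain ⟨hmono, -, hdeg, hlef⟩ := hF
  refine finrank_add_finrank_eq_of_map_sup_eq (ω ^ j) (hmono (by omega)) (hlef j hj).1
    fun x hx => ⟨(hlef j hj).2 x hx, fun hxD => ?_⟩
  convert pow_apply_mem_of_map_le hdeg j hxD using 2
  ring

lemma finrank_add_finrank_eq_finrank_nat (hF : IsLefschetzIncFiltration ω F k₀) (n : ℕ) :
    finrank k (F (k₀ + n)) + finrank k (F (k₀ - n - 1)) = finrank k V := by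
  have hconst : ∀ m : ℕ, finrank k (F (k₀ + m)) + finrank k (F (k₀ - m - 1)) =
      finrank k (F k₀) + finrank k (F (k₀ - 1)) := by
    intro m
    induction m with
    | zero => rw [Nat.cast_zero, add_zero, sub_zero]
    | succ n ih =>
      have h := hF.finrank_add_finrank_eq (j := n + 1) (by omega)
      rw [show k₀ + ((n + 1 : ℕ) : ℤ) - 1 = k₀ + n by push_cast; ring] at h
      rw [show k₀ - ((n + 1 : ℕ) : ℤ) = k₀ - n - 1 by push_cast; ring] at h ⊢
      omega
  obtain ⟨N, hbot, htop⟩ := hF.2.1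
  have hlarge := hconst (N + k₀.natAbs)
  rw [htop _ (by omega), hbot _ (by omega), finrank_top, finrank_bot] at hlarge
  rw [hconst n, ← hlarge, add_zero]

lemma finrank_add_finrank_eq_finrank (hF : IsLefschetzIncFiltration ω F k₀) (i : ℤ) :
    finrank k (F i) + finrank k (F (2 * k₀ - 1 - i)) = finrank k V := by
  rcases le_or_gt k₀ i with h | h
  · obtain ⟨n, rfl⟩ := Int.exists_add_of_le h
    rw [show 2 * k₀ - 1 - (k₀ + n) = k₀ - n - 1 by ring]
    exact hF.finrank_add_finrank_eq_finrank_nat n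
  · obtain ⟨n, hn⟩ := Int.exists_add_of_le h
    rw [show i = k₀ - n - 1 by omega, show 2 * k₀ - 1 - (k₀ - n - 1) = k₀ + n by ring,
      add_comm]
    exact hF.finrank_add_finrank_eq_finrank_nat n

end IsLefschetzIncFiltration

/-- If `ω` satisfies the Lefschetz property with the same middle weight `k₀` with respect
to two increasing filtrations `F` and `F'`, and `F_i ⊆ F'_i` for all `i`, then `F = F'`. -/
theorem stmt_2 {k : Type*} [Field k] {V : Type*} [AddCommGroup V] [Module k V]
    [FiniteDimensional k V] (ω : V →ₗ[k] V) (F F' : ℤ → Submodule k V) (k₀ : ℤ)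
    (hF : IsLefschetzIncFiltration ω F k₀) (hF' : IsLefschetzIncFiltration ω F' k₀)
    (hle : ∀ i : ℤ, F i ≤ F' i) : F = F' := by
  funext i
  refine eq_of_le_of_finrank_eq (hle i) ?_
  have hdual := hF.finrank_add_finrank_eq_finrank i
  have hdual' := hF'.finrank_add_finrank_eq_finrank i
  have hmono := finrank_mono (hle i)
  have hmono' := finrank_mono (hle (2 * k₀ - 1 - i))
  omega
end

section
/- For a finite-dimensional vector space V with increasing filtration F_• and operator ω : V → V of degree 2 satisfying the Lefschetz property with middle weight k, the following are equivalent: (1) the Deligne splitting satisfies ω^{i+1} Q^{i,0} = 0 for all i ≥ 0; (2) there exists a grading V = ⊕_i G_i with ω G_i ⊆ G_{i+2} and F_i = ⊕_{j ≤ i} G_j; (3) the monodromic filtration of ω splits F_•. -/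
/-- Lefschetz property with middle weight `k₀` with respect to a decreasing filtration;
for a given nilpotent `ω` such a filtration is unique, the monodromic filtration. -/
def IsLefschetzDecFiltrationAt {k : Type*} [Field k] {V : Type*} [AddCommGroup V]
    [Module k V] (ω : V →ₗ[k] V) (M : ℤ → Submodule k V) (k₀ : ℤ) : Prop :=
  Antitone M ∧
  (∃ N : ℕ, (∀ i : ℤ, i ≤ -(N : ℤ) → M i = ⊤) ∧ (∀ i : ℤ, (N : ℤ) ≤ i → M i = ⊥)) ∧
  (∀ i : ℤ, (M i).map ω ≤ M (i + 2)) ∧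
  (∀ i : ℕ, 0 < i →
    ((M (k₀ - i)).map (ω ^ i) ⊔ M (k₀ + i + 1) = M (k₀ + i)) ∧
    (∀ x ∈ M (k₀ - i), (ω ^ i) x ∈ M (k₀ + i + 1) → x ∈ M (k₀ - i + 1)))

/-- `Q` is a Deligne splitting for `(F, ω)` with middle weight `k₀`. -/
def IsDeligneSplitting {k : Type*} [Field k] {V : Type*} [AddCommGroup V]
    [Module k V] (ω : V →ₗ[k] V) (F : ℤ → Submodule k V) (k₀ : ℤ)
    (Q : ℕ → ℕ → Submodule k V) : Prop :=
  (∀ i j : ℕ, i < j → Q i j = ⊥) ∧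
  iSupIndep (fun p : ℕ × ℕ => Q p.1 p.2) ∧
  (⨆ p : ℕ × ℕ, Q p.1 p.2) = ⊤ ∧
  (∀ m : ℤ, F m = ⨆ (i : ℕ) (j : ℕ) (_ : j ≤ i ∧ k₀ - i + 2 * j ≤ m), Q i j) ∧
  (∀ i j : ℕ, j ≤ i →
    (Q i 0).map (ω ^ j) = Q i j ∧ ∀ x ∈ Q i 0, (ω ^ j) x = 0 → x = 0) ∧
  (∀ i r : ℕ, (Q i 0).map (ω ^ (i + r + 1)) ≤ F (k₀ + i + r))

theorem Int.strong_decreasing_induction {P : ℤ → Prop} (base : ∃ n, ∀ m > n, P m)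
    (step : ∀ n, (∀ m > n, P m) → P n) (n : ℤ) : P n := by
  obtain ⟨N, hN⟩ := base
  have key : ∀ c : ℤ, P (-c) := fun c ↦
    Int.strongRec (m := -N) (motive := fun c ↦ P (-c)) (fun c hc ↦ hN _ (by omega))
      (fun c _ ih ↦ step _ fun m hm ↦ by simpa using ih (-m) (by omega)) c
  simpa using key (-n)

theorem iSupIndep.iSup_fiber {α ι κ : Type*} [CompleteLattice α] [IsModularLattice α]
    [IsCompactlyGenerated α] {f : ι → α} (hf : iSupIndep f) (φ : ι → κ) :
    iSupIndep fun c ↦ ⨆ (i) (_ : φ i = c), f i := by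
  intro c
  refine (hf.disjoint_biSup_biSup (s := {i | φ i = c}) (t := {i | φ i ≠ c})
    (Set.disjoint_left.mpr fun _ hi hi' ↦ hi' hi)).mono_right ?_
  exact iSup₂_le fun c' hc' ↦ iSup₂_le fun i hi ↦ le_biSup f (show φ i ≠ c from hi ▸ hc')

section Lefschetz

variable {k V : Type*} [Field k] [AddCommGroup V] [Module k V]

theorem map_pow_le_of_map_le {ω : Module.End k V} {A : ℤ → Submodule k V}
    (h : ∀ i, (A i).map ω ≤ A (i + 2)) (c : ℕ) (m : ℤ) :
    (A m).map (ω ^ c) ≤ A (m + 2 * c) := by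
  induction c generalizing m with
  | zero => simp [Module.End.one_eq_id]
  | succ c ih =>
    rw [pow_succ, Module.End.mul_eq_comp, Submodule.map_comp]
    calc ((A m).map ω).map (ω ^ c) ≤ (A (m + 2)).map (ω ^ c) := Submodule.map_mono (h m)
      _ ≤ A (m + 2 + 2 * c) := ih _
      _ = A (m + 2 * ↑(c + 1)) := by push_cast; ring_nf

theorem eq_sup_of_forall_eq_iSup_le {A F : ℤ → Submodule k V}
    (hF : ∀ m, F m = ⨆ (j : ℤ) (_ : j ≤ m), A j) (m : ℤ) : F m = A m ⊔ F (m - 1) := by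
  rw [hF, hF]
  apply le_antisymm
  · refine iSup₂_le fun j hj ↦ ?_
    rcases hj.eq_or_lt with rfl | hlt
    · exact le_sup_left
    · exact le_sup_of_le_right (le_iSup₂_of_le j (by omega) le_rfl)
  · exact sup_le (le_iSup₂_of_le m le_rfl le_rfl)
      (iSup₂_le fun j hj ↦ le_iSup₂_of_le j (by omega) le_rfl)

namespace IsLefschetzIncFiltration

variable {ω : Module.End k V} {F : ℤ → Submodule k V} {k₀ : ℤ}

theorem eq_zero_of_pow_eq_zero (hF : IsLefschetzIncFiltration ω F k₀) {n : ℕ} (hn : 0 < n)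
    {x : V} (hx : x ∈ F (k₀ - n)) (hωx : (ω ^ n) x = 0) : x = 0 := by
  obtain ⟨-, ⟨N, hbot, -⟩, -, hlef⟩ := hF
  have descend : ∀ t : ℕ, x ∈ F (k₀ - ↑(n + t)) := by
    intro t
    induction t with
    | zero => simpa using hx
    | succ t ih =>
      have hker : (ω ^ (n + t)) x = 0 := Module.End.pow_map_zero_of_le (by omega) hωx
      have := (hlef (n + t) (by omega)).2 x ih (by rw [hker]; exact zero_mem _)
      convert this using 2
      push_cast; ring
  have := descend (N + k₀.natAbs)
  rwa [hbot _ (by omega), Submodule.mem_bot] at this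

end IsLefschetzIncFiltration

namespace IsLefschetzDecFiltrationAt

variable {ω : Module.End k V} {M : ℤ → Submodule k V} {k₀ : ℤ}

theorem isNilpotent (hM : IsLefschetzDecFiltrationAt ω M k₀) : IsNilpotent ω := by
  obtain ⟨-, ⟨N, htop, hbot⟩, hdeg, -⟩ := hM
  refine ⟨N, LinearMap.ext fun x ↦ ?_⟩
  have hx : x ∈ M (-N) := by simp [htop (-N) le_rfl]
  have := map_pow_le_of_map_le hdeg N (-N) (Submodule.mem_map_of_mem (f := ω ^ N) hx)
  rwa [hbot _ (by omega), Submodule.mem_bot] at this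

theorem ker_pow_le (hM : IsLefschetzDecFiltrationAt ω M k₀) {n : ℕ} (hn : 0 < n) :
    LinearMap.ker (ω ^ n) ≤ M (k₀ - n + 1) := by
  obtain ⟨-, ⟨N, htop, -⟩, -, hlef⟩ := hM
  intro x hx
  suffices ∀ t : ℕ, x ∈ M (k₀ - ↑(n + t) + 1) by simpa using this 0
  refine Nat.strong_decreasing_induction ⟨N + k₀.natAbs, fun t ht ↦ ?_⟩ fun t ih ↦ ?_
  · rw [htop _ (by omega)]
    exact Submodule.mem_top
  · have hker : (ω ^ (n + t)) x = 0 := Module.End.pow_map_zero_of_le (by omega) hx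
    have hxM : x ∈ M (k₀ - ↑(n + t)) := by
      convert ih (t + 1) (by omega) using 2
      push_cast; ring
    exact (hlef (n + t) (by omega)).2 x hxM (by rw [hker]; exact zero_mem _)

theorem map_pow_ker_pow_succ_le (hM : IsLefschetzDecFiltrationAt ω M k₀) (n : ℕ) :
    (LinearMap.ker (ω ^ (n + 1))).map (ω ^ n) ≤ M (k₀ + n) := by
  calc (LinearMap.ker (ω ^ (n + 1))).map (ω ^ n) ≤ (M (k₀ - ↑(n + 1) + 1)).map (ω ^ n) :=
        Submodule.map_mono (hM.ker_pow_le n.succ_pos)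
    _ ≤ M (k₀ - ↑(n + 1) + 1 + 2 * n) := map_pow_le_of_map_le hM.2.2.1 n _
    _ = M (k₀ + n) := by push_cast; ring_nf

end IsLefschetzDecFiltrationAt

structure IsCompatibleGrading (ω : Module.End k V) (F G : ℤ → Submodule k V) : Prop where
  iSupIndep : iSupIndep G
  iSup_eq_top : ⨆ i, G i = ⊤
  map_le : ∀ i, (G i).map ω ≤ G (i + 2)
  eq_iSup_le : ∀ m, F m = ⨆ (j : ℤ) (_ : j ≤ m), G j

theorem exists_isCompatibleGrading_iff {ω : Module.End k V} {F : ℤ → Submodule k V} :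
    (∃ G, IsCompatibleGrading ω F G) ↔
      ∃ G : ℤ → Submodule k V, iSupIndep G ∧ (⨆ i, G i) = ⊤ ∧
        (∀ i : ℤ, (G i).map ω ≤ G (i + 2)) ∧ (∀ m : ℤ, F m = ⨆ (j : ℤ) (_ : j ≤ m), G j) :=
  ⟨fun ⟨G, h⟩ ↦ ⟨G, h.1, h.2, h.3, h.4⟩, fun ⟨G, h₁, h₂, h₃, h₄⟩ ↦ ⟨G, ⟨h₁, h₂, h₃, h₄⟩⟩⟩

namespace IsDeligneSplitting

variable {ω : Module.End k V} {F : ℤ → Submodule k V} {k₀ : ℤ} {Q : ℕ → ℕ → Submodule k V}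

theorem map_le_succ (hQ : IsDeligneSplitting ω F k₀ Q)
    (h : ∀ i, (Q i 0).map (ω ^ (i + 1)) = ⊥) (i j : ℕ) : (Q i j).map ω ≤ Q i (j + 1) := by
  obtain ⟨hbot, -, -, -, hpow, -⟩ := hQ
  rcases lt_or_ge i j with hij | hji
  · simp [hbot i j hij]
  · rw [← (hpow i j hji).1, ← Submodule.map_comp, ← Module.End.mul_eq_comp, ← pow_succ']
    rcases hji.lt_or_eq with hji | rfl
    · exact (hpow i (j + 1) hji).1.le
    · simp [h]

theorem isCompatibleGrading (hQ : IsDeligneSplitting ω F k₀ Q)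
    (h : ∀ i, (Q i 0).map (ω ^ (i + 1)) = ⊥) :
    IsCompatibleGrading ω F fun m ↦ ⨆ (p : ℕ × ℕ) (_ : k₀ - p.1 + 2 * p.2 = m), Q p.1 p.2 := by
  have le_grading (p : ℕ × ℕ) {m : ℤ} (hm : k₀ - p.1 + 2 * p.2 = m) :
      Q p.1 p.2 ≤ ⨆ (q : ℕ × ℕ) (_ : k₀ - q.1 + 2 * q.2 = m), Q q.1 q.2 :=
    le_iSup₂_of_le p hm le_rfl
  refine ⟨hQ.2.1.iSup_fiber _, ?_, fun m ↦ ?_, fun m ↦ ?_⟩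
  · rw [eq_top_iff, ← hQ.2.2.1]
    exact iSup_le fun p ↦ le_iSup_of_le _ (le_grading p rfl)
  · simp only [Submodule.map_iSup]
    refine iSup₂_le fun p hp ↦ (hQ.map_le_succ h p.1 p.2).trans (le_grading (p.1, p.2 + 1) ?_)
    push_cast; omega
  · rw [hQ.2.2.2.1 m]
    apply le_antisymm
    · exact iSup_le fun i ↦ iSup_le fun j ↦ iSup_le fun hij ↦
        le_iSup₂_of_le _ hij.2 (le_grading (i, j) rfl)
    · refine iSup₂_le fun j' hj' ↦ iSup₂_le fun p hp ↦ ?_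
      rcases lt_or_ge p.1 p.2 with hlt | hle
      · simp [hQ.1 _ _ hlt]
      · exact le_iSup_of_le p.1 (le_iSup_of_le p.2 (le_iSup_of_le ⟨hle, by omega⟩ le_rfl))

end IsDeligneSplitting

namespace IsCompatibleGrading

variable {ω : Module.End k V} {F G M : ℤ → Submodule k V} {k₀ : ℤ}

theorem le_filtration (hG : IsCompatibleGrading ω F G) (j : ℤ) : G j ≤ F j := by
  rw [hG.eq_iSup_le j]
  exact le_iSup₂_of_le j le_rfl le_rfl

theorem disjoint_filtration_sub_one (hG : IsCompatibleGrading ω F G) (m : ℤ) :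
    Disjoint (G m) (F (m - 1)) := by
  refine (hG.iSupIndep m).mono_right ?_
  rw [hG.eq_iSup_le]
  exact iSup₂_le fun j hj ↦ le_iSup₂_of_le j (by omega) le_rfl

theorem eq_map_pow (hG : IsCompatibleGrading ω F G) (hF : IsLefschetzIncFiltration ω F k₀)
    {i : ℕ} (hi : 0 < i) : G (k₀ + i) = (G (k₀ - i)).map (ω ^ i) := by
  have hshift (A : ℤ → Submodule k V) (hA : ∀ j, (A j).map ω ≤ A (j + 2)) (m : ℤ) :
      (A (m - i)).map (ω ^ i) ≤ A (m + i) := by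
    simpa [two_mul, ← add_assoc] using map_pow_le_of_map_le hA i (m - i)
  have hmap : (G (k₀ - i)).map (ω ^ i) ≤ G (k₀ + i) := hshift G hG.map_le k₀
  have hcover : G (k₀ + i) ≤ (G (k₀ - i)).map (ω ^ i) ⊔ F (k₀ + i - 1) :=
    calc G (k₀ + i) ≤ F (k₀ + i) := hG.le_filtration _
      _ = (G (k₀ - i) ⊔ F (k₀ - i - 1)).map (ω ^ i) ⊔ F (k₀ + i - 1) := by
        rw [← eq_sup_of_forall_eq_iSup_le hG.eq_iSup_le, (hF.2.2.2 i hi).1]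
      _ ≤ (G (k₀ - i)).map (ω ^ i) ⊔ F (k₀ + i - 1) := by
        rw [Submodule.map_sup, sup_assoc]
        gcongr
        refine sup_le ?_ le_rfl
        simpa [sub_right_comm, sub_add_eq_add_sub] using hshift F hF.2.2.1 (k₀ - 1)
  calc G (k₀ + i) = ((G (k₀ - i)).map (ω ^ i) ⊔ F (k₀ + i - 1)) ⊓ G (k₀ + i) :=
        (inf_eq_right.mpr hcover).symm
    _ = (G (k₀ - i)).map (ω ^ i) ⊔ F (k₀ + i - 1) ⊓ G (k₀ + i) := sup_inf_assoc_of_le _ hmap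
    _ = (G (k₀ - i)).map (ω ^ i) := by
      rw [inf_comm, disjoint_iff.mp (hG.disjoint_filtration_sub_one _), sup_bot_eq]

theorem le_monodromy_of_le (hG : IsCompatibleGrading ω F G)
    (hF : IsLefschetzIncFiltration ω F k₀) (hM : IsLefschetzDecFiltrationAt ω M k₀) (j : ℤ)
    (hj : j ≤ k₀) : G j ≤ M j := by
  obtain ⟨N, hbot, -⟩ := hF.2.1
  induction j using Int.strongRec (m := -N) with
  | lt j hjN => exact ((hG.le_filtration j).trans (hbot j hjN.le).le).trans bot_le
  | ge j _ ih =>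
    obtain ⟨d, rfl⟩ : ∃ d : ℕ, j = k₀ - d := ⟨(k₀ - j).toNat, by omega⟩
    intro y hy
    have hωy : (ω ^ (d + 1)) y ∈ G (k₀ + ↑(d + 2)) := by
      convert map_pow_le_of_map_le hG.map_le (d + 1) _ (Submodule.mem_map_of_mem hy) using 2
      push_cast; ring
    rw [hG.eq_map_pow hF (by omega)] at hωy
    obtain ⟨z, hz, hzy⟩ := hωy
    have hzM : ω z ∈ M (k₀ - d) := by
      convert hM.2.2.1 _ (Submodule.mem_map_of_mem (ih _ (by omega) (by omega) hz)) using 2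
      push_cast; ring
    have hker : y - ω z ∈ LinearMap.ker (ω ^ (d + 1)) := by
      rw [LinearMap.mem_ker, map_sub, ← Module.End.mul_apply, ← pow_succ, hzy, sub_self]
    have hkerM := hM.ker_pow_le d.succ_pos hker
    rw [Nat.cast_succ, sub_add_eq_sub_sub, sub_add_cancel] at hkerM
    simpa using add_mem hkerM hzM

theorem le_monodromy (hG : IsCompatibleGrading ω F G) (hF : IsLefschetzIncFiltration ω F k₀)
    (hM : IsLefschetzDecFiltrationAt ω M k₀) (j : ℤ) : G j ≤ M j := by
  rcases le_or_gt j k₀ with hj | hj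
  · exact hG.le_monodromy_of_le hF hM j hj
  obtain ⟨e, rfl⟩ : ∃ e : ℕ, j = k₀ + e := ⟨(j - k₀).toNat, by omega⟩
  calc G (k₀ + e) = (G (k₀ - e)).map (ω ^ e) := hG.eq_map_pow hF (by omega)
    _ ≤ (M (k₀ - e)).map (ω ^ e) := Submodule.map_mono (hG.le_monodromy_of_le hF hM _ (by omega))
    _ ≤ M (k₀ - e + 2 * e) := map_pow_le_of_map_le hM.2.2.1 e _
    _ = M (k₀ + e) := by ring_nf

theorem splits (hG : IsCompatibleGrading ω F G) (hF : IsLefschetzIncFiltration ω F k₀)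
    (hM : IsLefschetzDecFiltrationAt ω M k₀) (m : ℤ) :
    F m = ⨆ (j : ℤ) (_ : j ≤ m), F j ⊓ M j := by
  apply le_antisymm
  · rw [hG.eq_iSup_le m]
    exact iSup₂_mono fun j _ ↦ le_inf (hG.le_filtration j) (hG.le_monodromy hF hM j)
  · exact iSup₂_le fun j hj ↦ inf_le_left.trans (hF.1 hj)

end IsCompatibleGrading

namespace IsLefschetzIncFiltration

variable {ω : Module.End k V} {F M : ℤ → Submodule k V} {k₀ : ℤ}

theorem le_inf_sup_of_splits (hF : IsLefschetzIncFiltration ω F k₀) (hM : Antitone M)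
    (hsplit : ∀ m, F m = ⨆ (j : ℤ) (_ : j ≤ m), F j ⊓ M j) (w : ℤ) :
    M w ≤ F w ⊓ M w ⊔ M (w + 1) := by
  obtain ⟨N, -, htop⟩ := hF.2.1
  have key : ∀ t : ℕ, F (w + t) ⊓ M w ≤ F w ⊓ M w ⊔ M (w + 1) := by
    intro t
    induction t with
    | zero => simp
    | succ t ih =>
      have hstep := eq_sup_of_forall_eq_iSup_le hsplit (w + ↑(t + 1))
      rw [show w + ↑(t + 1) - 1 = w + t by push_cast; ring] at hstep
      have hle : F (w + ↑(t + 1)) ⊓ M (w + ↑(t + 1)) ≤ M (w + 1) :=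
        inf_le_right.trans (hM (by omega))
      calc F (w + ↑(t + 1)) ⊓ M w
          = (F (w + ↑(t + 1)) ⊓ M (w + ↑(t + 1)) ⊔ F (w + t)) ⊓ M w := by rw [← hstep]
        _ = F (w + ↑(t + 1)) ⊓ M (w + ↑(t + 1)) ⊔ F (w + t) ⊓ M w :=
          sup_inf_assoc_of_le _ (hle.trans (hM (by omega)))
        _ ≤ F w ⊓ M w ⊔ M (w + 1) := sup_le (hle.trans le_sup_right) ih
  calc M w = F (w + ↑(N - w).toNat) ⊓ M w := by rw [htop _ (by omega), top_inf_eq]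
    _ ≤ F w ⊓ M w ⊔ M (w + 1) := key _

theorem disjoint_sub_one_of_le (hF : IsLefschetzIncFiltration ω F k₀)
    (hM : IsLefschetzDecFiltrationAt ω M k₀) {b : ℤ} (hb : b ≤ k₀)
    (ih : ∀ b' > b, Disjoint (F (b' - 1)) (M b')) : Disjoint (F (b - 1)) (M b) := by
  obtain ⟨i, hi⟩ : ∃ i : ℕ, k₀ - i = b - 1 := ⟨(k₀ - b + 1).toNat, by omega⟩
  refine Submodule.disjoint_def.mpr fun x hxF hxM ↦ ?_
  have hωF : (ω ^ i) x ∈ F (b + 2 * i - 1) := by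
    convert map_pow_le_of_map_le hF.2.2.1 i _ (Submodule.mem_map_of_mem hxF) using 2; ring
  have hωM := map_pow_le_of_map_le hM.2.2.1 i _ (Submodule.mem_map_of_mem hxM)
  have hωx : (ω ^ i) x = 0 := Submodule.disjoint_def.mp (ih _ (by omega)) _ hωF hωM
  exact hF.eq_zero_of_pow_eq_zero (by omega) (hi ▸ hxF) hωx

theorem disjoint_sub_one_of_lt (hF : IsLefschetzIncFiltration ω F k₀)
    (hM : IsLefschetzDecFiltrationAt ω M k₀)
    (hsplit : ∀ m, F m = ⨆ (j : ℤ) (_ : j ≤ m), F j ⊓ M j) {b : ℤ} (hb : k₀ < b)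
    (ih : ∀ b' > b, Disjoint (F (b' - 1)) (M b')) : Disjoint (F (b - 1)) (M b) := by
  obtain ⟨s, rfl⟩ : ∃ s : ℕ, b = k₀ + s := ⟨(b - k₀).toNat, by omega⟩
  have hs : 0 < s := by omega
  have hMb : M (k₀ + s) ≤ (F (k₀ - s)).map (ω ^ s) ⊔ M (k₀ + s + 1) := by
    rw [← (hM.2.2.2 s hs).1]
    refine sup_le ?_ le_sup_right
    calc (M (k₀ - s)).map (ω ^ s)
        ≤ (F (k₀ - s) ⊓ M (k₀ - s) ⊔ M (k₀ - s + 1)).map (ω ^ s) :=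
          Submodule.map_mono (hF.le_inf_sup_of_splits hM.1 hsplit _)
      _ ≤ (F (k₀ - s)).map (ω ^ s) ⊔ M (k₀ - s + 1 + 2 * s) := by
          rw [Submodule.map_sup]
          exact sup_le_sup (Submodule.map_mono inf_le_left) (map_pow_le_of_map_le hM.2.2.1 s _)
      _ = (F (k₀ - s)).map (ω ^ s) ⊔ M (k₀ + s + 1) := by ring_nf
  refine Submodule.disjoint_def.mpr fun x hxF hxM ↦ ?_
  obtain ⟨_, ⟨g, hg, rfl⟩, w, hw, hgw⟩ := Submodule.mem_sup.mp (hMb hxM)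
  have hωg : (ω ^ s) g ∈ F (k₀ + s) := by
    convert map_pow_le_of_map_le hF.2.2.1 s _ (Submodule.mem_map_of_mem hg) using 2; ring
  have hwF : w ∈ F (k₀ + s + 1 - 1) := by
    rw [add_sub_cancel_right, eq_sub_of_add_eq' hgw]
    exact sub_mem (hF.1 (by omega) hxF) hωg
  have hgx : (ω ^ s) g = x := by
    rwa [Submodule.disjoint_def.mp (ih _ (by omega)) w hwF hw, add_zero] at hgw
  have hωx : ω x = 0 := by
    refine Submodule.disjoint_def.mp (ih (k₀ + s + 2) (by omega)) _ ?_
      (hM.2.2.1 _ (Submodule.mem_map_of_mem hxM))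
    convert hF.2.2.1 _ (Submodule.mem_map_of_mem hxF) using 2; ring
  have hg' : g ∈ F (k₀ - ↑(s + 1)) := by
    convert (hF.2.2.2 s hs).2 g hg (hgx ▸ hxF) using 2; push_cast; ring
  have hg0 : g = 0 := hF.eq_zero_of_pow_eq_zero (by omega) hg' (by
    rw [pow_succ', Module.End.mul_apply, hgx, hωx])
  rw [← hgx, hg0, map_zero]

theorem disjoint_sub_one_of_splits (hF : IsLefschetzIncFiltration ω F k₀)
    (hM : IsLefschetzDecFiltrationAt ω M k₀)
    (hsplit : ∀ m, F m = ⨆ (j : ℤ) (_ : j ≤ m), F j ⊓ M j) (b : ℤ) :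
    Disjoint (F (b - 1)) (M b) := by
  obtain ⟨N, -, hbot⟩ := hM.2.1
  induction b using Int.strong_decreasing_induction with
  | base => exact ⟨N, fun b hb ↦ by simp [hbot b hb.le]⟩
  | step b ih =>
    rcases le_or_gt b k₀ with hb | hb
    · exact hF.disjoint_sub_one_of_le hM hb ih
    · exact hF.disjoint_sub_one_of_lt hM hsplit hb ih

end IsLefschetzIncFiltration

namespace IsLefschetzDecFiltrationAt

variable {ω : Module.End k V} {F M : ℤ → Submodule k V} {k₀ : ℤ}

theorem map_pow_eq_bot_of_disjoint (hM : IsLefschetzDecFiltrationAt ω M k₀)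
    (hdisj : ∀ b, Disjoint (F (b - 1)) (M b)) {S : Submodule k V} {i : ℕ}
    (hS : ∀ r : ℕ, S.map (ω ^ (i + r + 1)) ≤ F (k₀ + i + r)) :
    S.map (ω ^ (i + 1)) = ⊥ := by
  obtain ⟨N, hN⟩ := hM.isNilpotent
  suffices ∀ r : ℕ, S.map (ω ^ (i + r + 1)) = ⊥ by simpa using this 0
  refine Nat.strong_decreasing_induction ⟨N, fun r hr ↦ ?_⟩ fun r ih ↦ ?_
  · simp [pow_eq_zero_of_le (show N ≤ i + r + 1 by omega) hN]
  rw [eq_bot_iff]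
  rintro _ ⟨x, hx, rfl⟩
  have hker : x ∈ LinearMap.ker (ω ^ (i + r + 1 + 1)) := by
    simpa [← add_assoc] using (ih (r + 1) (by omega)).le (Submodule.mem_map_of_mem hx)
  have hxM := hM.map_pow_ker_pow_succ_le _ (Submodule.mem_map_of_mem hker)
  have hxF : (ω ^ (i + r + 1)) x ∈ F (k₀ + ↑(i + r + 1) - 1) := by
    convert hS r (Submodule.mem_map_of_mem hx) using 2; push_cast; ring
  exact (Submodule.mem_bot k).mpr (Submodule.disjoint_def.mp (hdisj _) _ hxF hxM)

end IsLefschetzDecFiltrationAt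

end Lefschetz

theorem stmt_3_general {k : Type*} [Field k] {V : Type*} [AddCommGroup V] [Module k V]
    (ω : V →ₗ[k] V) (F M : ℤ → Submodule k V) (k₀ : ℤ)
    (Q : ℕ → ℕ → Submodule k V)
    (hF : IsLefschetzIncFiltration ω F k₀)
    (hQ : IsDeligneSplitting ω F k₀ Q)
    (hM : IsLefschetzDecFiltrationAt ω M k₀) :
    ((∀ i : ℕ, (Q i 0).map (ω ^ (i + 1)) = ⊥) ↔
      (∃ G : ℤ → Submodule k V, iSupIndep G ∧ (⨆ i, G i) = ⊤ ∧
        (∀ i : ℤ, (G i).map ω ≤ G (i + 2)) ∧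
        (∀ m : ℤ, F m = ⨆ (j : ℤ) (_ : j ≤ m), G j))) ∧
    ((∃ G : ℤ → Submodule k V, iSupIndep G ∧ (⨆ i, G i) = ⊤ ∧
        (∀ i : ℤ, (G i).map ω ≤ G (i + 2)) ∧
        (∀ m : ℤ, F m = ⨆ (j : ℤ) (_ : j ≤ m), G j)) ↔
      (∀ m : ℤ, F m = ⨆ (j : ℤ) (_ : j ≤ m), F j ⊓ M j)) := by
  rw [← exists_isCompatibleGrading_iff]
  have one_two (h : ∀ i : ℕ, (Q i 0).map (ω ^ (i + 1)) = ⊥) : ∃ G, IsCompatibleGrading ω F G :=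
    ⟨_, hQ.isCompatibleGrading h⟩
  have two_three : (∃ G, IsCompatibleGrading ω F G) →
      ∀ m, F m = ⨆ (j : ℤ) (_ : j ≤ m), F j ⊓ M j :=
    fun ⟨_, hG⟩ ↦ hG.splits hF hM
  have three_one (h : ∀ m, F m = ⨆ (j : ℤ) (_ : j ≤ m), F j ⊓ M j) (i : ℕ) :
      (Q i 0).map (ω ^ (i + 1)) = ⊥ :=
    hM.map_pow_eq_bot_of_disjoint (hF.disjoint_sub_one_of_splits hM h) (hQ.2.2.2.2.2 i)
  exact ⟨⟨one_two, three_one ∘ two_three⟩, ⟨two_three, one_two ∘ three_one⟩⟩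

/-- The split Lefschetz property: equivalence of
(1) `ω^{i+1} Q^{i,0} = 0` for all `i ≥ 0` (in the Deligne splitting);
(2) existence of a grading `V = ⊕ G_i` with `ω G_i ⊆ G_{i+2}` and `F_i = ⊕_{j≤i} G_j`;
(3) the monodromic filtration `M` of `ω` splits `F`. -/
theorem stmt_3 {k : Type*} [Field k] {V : Type*} [AddCommGroup V] [Module k V]
    [FiniteDimensional k V] (ω : V →ₗ[k] V) (F M : ℤ → Submodule k V) (k₀ : ℤ)
    (Q : ℕ → ℕ → Submodule k V)
    (hF : IsLefschetzIncFiltration ω F k₀)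
    (hQ : IsDeligneSplitting ω F k₀ Q)
    (hM : IsLefschetzDecFiltrationAt ω M k₀) :
    ((∀ i : ℕ, (Q i 0).map (ω ^ (i + 1)) = ⊥) ↔
      (∃ G : ℤ → Submodule k V, iSupIndep G ∧ (⨆ i, G i) = ⊤ ∧
        (∀ i : ℤ, (G i).map ω ≤ G (i + 2)) ∧
        (∀ m : ℤ, F m = ⨆ (j : ℤ) (_ : j ≤ m), G j))) ∧
    ((∃ G : ℤ → Submodule k V, iSupIndep G ∧ (⨆ i, G i) = ⊤ ∧
        (∀ i : ℤ, (G i).map ω ≤ G (i + 2)) ∧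
        (∀ m : ℤ, F m = ⨆ (j : ℤ) (_ : j ≤ m), G j)) ↔
      (∀ m : ℤ, F m = ⨆ (j : ℤ) (_ : j ≤ m), F j ⊓ M j)) :=
  stmt_3_general ω F M k₀ Q hF hQ hM
end

section
/- Let f, g, h : X → GL_n(ℂ) be smooth maps from a smooth manifold (or smooth morphisms from a smooth algebraic variety), and define the 2-form (f|g) := trace(f^{-1} df ∧ dg g^{-1}). Then the 2-cocycle identity holds: (f | g·h) + (g | h) = (f·g | h) + (f | g), where f·g denotes the pointwise matrix product. -/
/-! With `θ_f = f⁻¹ df` and `ρ_g = dg g⁻¹` one has `(f|g) = tr(θ_f ∧ ρ_g)`. The product rule gives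
`θ_{fg} = g⁻¹ θ_f g + θ_g` and `ρ_{gh} = ρ_g + g ρ_h g⁻¹`, so by bilinearity each side of the
identity is `(f|g) + (g|h)` plus a cross term, `tr(θ_f ∧ g ρ_h g⁻¹)` on the left and
`tr(g⁻¹ θ_f g ∧ ρ_h)` on the right; these agree by cyclicity of the trace. -/

attribute [local instance] Matrix.normedAddCommGroup Matrix.normedSpace

/-- For maps `f, g : X → GL_n(ℂ)`, the scalar 2-form `(f|g) = trace(f⁻¹ df ∧ dg g⁻¹)`,
evaluated at a point `x` on a pair of tangent vectors `(v, w)`. -/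
noncomputable def pairForm {E : Type*} [NormedAddCommGroup E] [NormedSpace ℂ E] {n : ℕ}
    (f g : E → Matrix (Fin n) (Fin n) ℂ) (x v w : E) : ℂ :=
  ((f x)⁻¹ * fderiv ℂ f x v * fderiv ℂ g x w * (g x)⁻¹).trace
    - ((f x)⁻¹ * fderiv ℂ f x w * fderiv ℂ g x v * (g x)⁻¹).trace

open Matrix

section WedgeTrace

variable {V R m : Type*} [CommRing R] [Fintype m]

/-- `tr(α ∧ β)` for matrix-valued 1-forms `α, β`, evaluated on `(v, w)`. -/
def wedgeTrace (α β : V → Matrix m m R) (v w : V) : R :=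
  (α v * β w).trace - (α w * β v).trace

theorem wedgeTrace_add_left (α α' β : V → Matrix m m R) (v w : V) :
    wedgeTrace (fun u => α u + α' u) β v w = wedgeTrace α β v w + wedgeTrace α' β v w := by
  simp only [wedgeTrace, add_mul, trace_add]
  ring

theorem wedgeTrace_add_right (α β β' : V → Matrix m m R) (v w : V) :
    wedgeTrace α (fun u => β u + β' u) v w = wedgeTrace α β v w + wedgeTrace α β' v w := by
  simp only [wedgeTrace, mul_add, trace_add]
  ring

theorem wedgeTrace_conj_right (α β : V → Matrix m m R) (P Q : Matrix m m R) (v w : V) :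
    wedgeTrace α (fun u => P * β u * Q) v w = wedgeTrace (fun u => Q * α u * P) β v w := by
  simp only [wedgeTrace, ← mul_assoc, trace_mul_cycle _ _ Q]

end WedgeTrace

section LogDeriv

variable {𝕜 E m : Type*} [NontriviallyNormedField 𝕜] [CompleteSpace 𝕜]
  [NormedAddCommGroup E] [NormedSpace 𝕜 E] [Fintype m]

theorem fderiv_matrix_mul_apply {f g : E → Matrix m m 𝕜} {x : E}
    (hf : DifferentiableAt 𝕜 f x) (hg : DifferentiableAt 𝕜 g x) (v : E) :
    fderiv 𝕜 (fun y => f y * g y) x v = fderiv 𝕜 f x v * g x + f x * fderiv 𝕜 g x v := by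
  have h := (LinearMap.mul 𝕜 (Matrix m m 𝕜)).toContinuousBilinearMap.fderiv_of_bilinear hf hg
  exact (congrArg (· v) h).trans (add_comm _ _)

variable [DecidableEq m]

noncomputable def leftLogDeriv (f : E → Matrix m m 𝕜) (x v : E) : Matrix m m 𝕜 :=
  (f x)⁻¹ * fderiv 𝕜 f x v

noncomputable def rightLogDeriv (f : E → Matrix m m 𝕜) (x v : E) : Matrix m m 𝕜 :=
  fderiv 𝕜 f x v * (f x)⁻¹

theorem leftLogDeriv_mul {f g : E → Matrix m m 𝕜} {x : E}
    (hf : DifferentiableAt 𝕜 f x) (hg : DifferentiableAt 𝕜 g x) (hfx : IsUnit (f x)) :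
    leftLogDeriv (fun y => f y * g y) x
      = fun v => (g x)⁻¹ * leftLogDeriv f x v * g x + leftLogDeriv g x v := by
  ext1 v
  simp only [leftLogDeriv, fderiv_matrix_mul_apply hf hg, Matrix.mul_inv_rev, mul_add, mul_assoc,
    nonsing_inv_mul_cancel_left (h := (isUnit_iff_isUnit_det _).mp hfx)]

theorem rightLogDeriv_mul {f g : E → Matrix m m 𝕜} {x : E}
    (hf : DifferentiableAt 𝕜 f x) (hg : DifferentiableAt 𝕜 g x) (hgx : IsUnit (g x)) :
    rightLogDeriv (fun y => f y * g y) x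
      = fun v => rightLogDeriv f x v + f x * rightLogDeriv g x v * (f x)⁻¹ := by
  ext1 v
  simp only [rightLogDeriv, fderiv_matrix_mul_apply hf hg, Matrix.mul_inv_rev, add_mul, mul_assoc,
    mul_nonsing_inv_cancel_left (h := (isUnit_iff_isUnit_det _).mp hgx)]

end LogDeriv

theorem pairForm_eq_wedgeTrace {E : Type*} [NormedAddCommGroup E] [NormedSpace ℂ E] {n : ℕ}
    (f g : E → Matrix (Fin n) (Fin n) ℂ) (x v w : E) :
    pairForm f g x v w = wedgeTrace (leftLogDeriv f x) (rightLogDeriv g x) v w := by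
  simp only [pairForm, wedgeTrace, leftLogDeriv, rightLogDeriv, mul_assoc]

theorem stmt_4_general {E : Type*} [NormedAddCommGroup E] [NormedSpace ℂ E] {n : ℕ}
    (f g h : E → Matrix (Fin n) (Fin n) ℂ)
    (hf : Differentiable ℂ f) (hg : Differentiable ℂ g) (hh : Differentiable ℂ h)
    (hfu : ∀ x, IsUnit (f x)) (hhu : ∀ x, IsUnit (h x)) :
    ∀ x v w : E,
      pairForm f (fun y => g y * h y) x v w + pairForm g h x v w
        = pairForm (fun y => f y * g y) h x v w + pairForm f g x v w := by
  intro x v w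
  simp only [pairForm_eq_wedgeTrace, leftLogDeriv_mul (hf x) (hg x) (hfu x),
    rightLogDeriv_mul (hg x) (hh x) (hhu x), wedgeTrace_add_left, wedgeTrace_add_right,
    wedgeTrace_conj_right]
  ring

/-- The 2-cocycle identity `(f|gh) + (g|h) = (fg|h) + (f|g)`. -/
theorem stmt_4 {E : Type*} [NormedAddCommGroup E] [NormedSpace ℂ E] {n : ℕ}
    (f g h : E → Matrix (Fin n) (Fin n) ℂ)
    (hf : Differentiable ℂ f) (hg : Differentiable ℂ g) (hh : Differentiable ℂ h)
    (hfu : ∀ x, IsUnit (f x)) (hgu : ∀ x, IsUnit (g x)) (hhu : ∀ x, IsUnit (h x)) :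
    ∀ x v w : E,
      pairForm f (fun y => g y * h y) x v w + pairForm g h x v w
        = pairForm (fun y => f y * g y) h x v w + pairForm f g x v w :=
  stmt_4_general f g h hf hg hh hfu hhu
end

section
/- For 1 ≤ i ≤ n-1 and z in the field, let f_i(z) = τ_i·(Id + z·e_{i,i+1}) ∈ GL_n, where τ_i is the permutation matrix of the transposition (i, i+1). Then f_1(z₁) f_2(z₂) f_1(z₃) = f_2(z₃) f_1(z₂ - z₁z₃) f_2(z₁) (braid relation inside 3×3 blocks), and f_i(z) f_j(w) = f_j(w) f_i(z) whenever |i - j| > 1. Hence the assignment σ_i ↦ (z ↦ f_i(z)) defines a representation of the positive braid monoid Br_n^+ on parametrized families of matrices. -/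
/-!
Swapping rows `a` and `b` of the transvection `1 + z e_{ab}` gives the closed form
`1 - e_{aa} + e_{ab} + e_{ba} + (z - 1) e_{bb}`, for any two distinct indices of any index type.
Both braid relations then follow by expanding products with `e_{ij} e_{kl} = δ_{jk} e_{il}`.
-/

/-- The matrix `f_i(z) = τ_i (Id + z e_{i,i+1}) ∈ GL_n(K)`, where `τ_i` is the
permutation matrix of the transposition `(i, i+1)`. -/
def braidGen (K : Type*) [Field K] (n : ℕ) (i : ℕ) (hi : i + 1 < n) (z : K) :
    Matrix (Fin n) (Fin n) K :=
  (Equiv.swap (⟨i, Nat.lt_of_succ_lt hi⟩ : Fin n) ⟨i + 1, hi⟩).permMatrix K *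
    (1 + Matrix.single (⟨i, Nat.lt_of_succ_lt hi⟩ : Fin n) ⟨i + 1, hi⟩ z)

namespace Matrix

open Equiv

variable {m R : Type*} [Fintype m] [DecidableEq m] [CommRing R]

def swapTransvection (a b : m) (z : R) : Matrix m m R :=
  (Equiv.swap a b).permMatrix R * transvection a b z

theorem swapTransvection_eq {a b : m} (hab : a ≠ b) (z : R) :
    swapTransvection a b z =
      1 - single a a 1 + single a b 1 + single b a 1 + single b b (z - 1) := by
  rw [swapTransvection, Perm.permMatrix, PEquiv.toMatrix_toPEquiv_mul]
  ext i j
  simp only [transvection, submatrix_apply, id, add_apply, sub_apply, one_apply, single_apply,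
    swap_apply_def]
  by_cases hia : i = a <;> by_cases hib : i = b <;> by_cases hja : j = a <;>
    by_cases hjb : j = b <;> simp_all [eq_comm]

theorem swapTransvection_braid {a b c : m} (hab : a ≠ b) (hbc : b ≠ c) (hac : a ≠ c)
    (z₁ z₂ z₃ : R) :
    swapTransvection a b z₁ * swapTransvection b c z₂ * swapTransvection a b z₃ =
      swapTransvection b c z₃ * swapTransvection a b (z₂ - z₁ * z₃) *
        swapTransvection b c z₁ := by
  simp only [swapTransvection_eq hab, swapTransvection_eq hbc, sub_mul, add_mul, mul_sub,
    mul_add, one_mul, mul_one, single_mul_single_same, single_mul_single_of_ne, hab, hbc, hac,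
    hab.symm, hbc.symm, hac.symm, Ne, not_false_iff, add_zero, sub_zero]
  abel_nf
  simp only [← single_add, neg_smul, one_smul]
  ring_nf
  abel

theorem swapTransvection_commute {a b c d : m} (hab : a ≠ b) (hcd : c ≠ d) (hac : a ≠ c)
    (had : a ≠ d) (hbc : b ≠ c) (hbd : b ≠ d) (z w : R) :
    Commute (swapTransvection a b z) (swapTransvection c d w) := by
  simp only [Commute, SemiconjBy, swapTransvection_eq hab, swapTransvection_eq hcd, sub_mul,
    add_mul, mul_sub, mul_add, one_mul, mul_one, single_mul_single_of_ne, hac, had, hbc, hbd,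
    hac.symm, had.symm, hbc.symm, hbd.symm, Ne, not_false_iff, add_zero, sub_zero]
  abel

end Matrix

theorem braidGen_eq_swapTransvection (K : Type*) [Field K] (n i : ℕ) (hi : i + 1 < n) (z : K) :
    braidGen K n i hi z = Matrix.swapTransvection ⟨i, Nat.lt_of_succ_lt hi⟩ ⟨i + 1, hi⟩ z :=
  rfl

/-- The braid relations for the matrices `f_i(z)`:
`f_i(z₁) f_{i+1}(z₂) f_i(z₃) = f_{i+1}(z₃) f_i(z₂ - z₁z₃) f_{i+1}(z₁)` and
`f_i(z) f_j(w) = f_j(w) f_i(z)` for `|i - j| > 1`; hence `σ_i ↦ f_i` defines a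
representation of the positive braid monoid `Br_n⁺` on parametrized families of
matrices. -/
theorem stmt_9 (K : Type*) [Field K] (n : ℕ) :
    (∀ (i : ℕ) (h : i + 1 + 1 < n) (z₁ z₂ z₃ : K),
      braidGen K n i (Nat.lt_of_succ_lt h) z₁ * braidGen K n (i + 1) h z₂ *
          braidGen K n i (Nat.lt_of_succ_lt h) z₃
        = braidGen K n (i + 1) h z₃ *
            braidGen K n i (Nat.lt_of_succ_lt h) (z₂ - z₁ * z₃) *
            braidGen K n (i + 1) h z₁) ∧
    (∀ (i j : ℕ) (hi : i + 1 < n) (hj : j + 1 < n), (i + 1 < j ∨ j + 1 < i) →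
      ∀ z w : K,
        braidGen K n i hi z * braidGen K n j hj w
          = braidGen K n j hj w * braidGen K n i hi z) := by
  simp only [braidGen_eq_swapTransvection]
  refine ⟨fun i h z₁ z₂ z₃ => ?_, fun i j hi hj hij z w => ?_⟩
  · refine Matrix.swapTransvection_braid ?_ ?_ ?_ z₁ z₂ z₃ <;>
      simp only [ne_eq, Fin.mk.injEq] <;> omega
  · refine Matrix.swapTransvection_commute ?_ ?_ ?_ ?_ ?_ ?_ z w <;>
      simp only [ne_eq, Fin.mk.injEq] <;> omega
end
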